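/- For every a ≥ 0 and every n ≥ 1, the coefficients of the elephant polynomial R_n have alternating signs: the coefficient of x^{n−2k} has sign (−1)^k (it is ≥ 0 if k is even and ≤ 0 if k is odd). -/

import Mathlib

open Polynomial

/- With `c = a / n ≥ 0`, the recursion `q = X p - c (1 - X²) p'` acts on coefficients by
`q_{j+1} = (1 + c j) p_j - c (j + 2) p_{j+2}` and `q_0 = -c p_1`. For `p` of degree `≤ m` put
`b_k = (-1)^k p_{m-2k}`; then `(-1)^k q_{m+1-2k} = (1 + c j) b_k + c (j + 2) b_{k-1}` with
`j = m - 2k` (the first term being absent when `j = -1`, the second when `k = 0`). Both weights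
are nonnegative, so nonnegativity of the `b_k` propagates from `R_n` to `R_{n+1}`. -/

/-- The elephant polynomials: `R a 1 = X` and
`R a (n+1) = X * R a n - (a/n) * (1 - X^2) * (R a n)'` for `n ≥ 1`. -/
noncomputable def elephantR (a : ℝ) : ℕ → Polynomial ℝ
  | 0 => 1
  | 1 => X
  | n + 2 => X * elephantR a (n + 1) -
      C (a / ((n : ℝ) + 1)) * ((1 - X ^ 2) * (elephantR a (n + 1)).derivative)

noncomputable def elephantStep {R : Type*} [CommRing R] (c : R) (p : R[X]) : R[X] :=
  X * p - C c * ((1 - X ^ 2) * derivative p)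

lemma elephantR_add_two (a : ℝ) (n : ℕ) :
    elephantR a (n + 2) = elephantStep (a / ((n : ℝ) + 1)) (elephantR a (n + 1)) := by
  rw [elephantR, elephantStep]

section Coefficients

variable {R : Type*} [CommRing R] (c : R) (p : R[X])

lemma natDegree_elephantStep_le {m : ℕ} (hp : p.natDegree ≤ m) :
    (elephantStep c p).natDegree ≤ m + 1 := by
  have hXp : (X * p).natDegree ≤ m + 1 :=
    (natDegree_mul_le_of_le natDegree_X_le hp).trans (by omega)
  by_cases hconst : p.natDegree = 0
  · simpa [elephantStep, derivative_of_natDegree_zero hconst] using hXp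
  have hquad : (1 - X ^ 2 : R[X]).natDegree ≤ 2 :=
    natDegree_sub_le_of_le (m := 0) (by simp) (natDegree_X_pow_le 2)
  have hder : (derivative p).natDegree + 1 ≤ m := (natDegree_derivative_lt hconst).trans_le hp
  have hrest : (C c * ((1 - X ^ 2) * derivative p)).natDegree ≤ m + 1 :=
    (natDegree_C_mul_le _ _).trans ((natDegree_mul_le_of_le hquad le_rfl).trans (by omega))
  exact (natDegree_sub_le_of_le hXp hrest).trans (max_self _).le

lemma coeff_elephantStep_zero : (elephantStep c p).coeff 0 = -c * p.coeff 1 := by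
  simp [elephantStep, mul_coeff_zero, coeff_derivative]

lemma coeff_elephantStep_succ (j : ℕ) :
    (elephantStep c p).coeff (j + 1) =
      (1 + c * j) * p.coeff j - c * (j + 2) * p.coeff (j + 2) := by
  have hX2 : (X ^ 2 * derivative p).coeff (j + 1) =
      if 2 ≤ j + 1 then (derivative p).coeff (j + 1 - 2) else 0 := by
    rw [commute_X_pow, coeff_mul_X_pow']
  simp only [elephantStep, sub_mul, one_mul, mul_sub, coeff_sub, coeff_C_mul, coeff_X_mul, hX2,
    coeff_derivative]
  rcases j with _ | j
  · simp
    ring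
  · simp only [show 2 ≤ j + 1 + 1 by omega, if_true, show j + 1 + 1 - 2 = j by omega]
    push_cast
    ring

end Coefficients

section Signs

variable {R : Type*} [CommRing R] [LinearOrder R] [IsStrictOrderedRing R]

def HasAltCoeffSigns (m : ℕ) (p : R[X]) : Prop :=
  p.natDegree ≤ m ∧ ∀ k, 2 * k ≤ m → 0 ≤ (-1 : R) ^ k * p.coeff (m - 2 * k)

lemma hasAltCoeffSigns_one : HasAltCoeffSigns 0 (1 : R[X]) :=
  ⟨by simp, fun k hk => by simp [show k = 0 by omega]⟩

lemma hasAltCoeffSigns_X : HasAltCoeffSigns 1 (X : R[X]) :=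
  ⟨natDegree_X_le, fun k hk => by simp [show k = 0 by omega]⟩

lemma HasAltCoeffSigns.elephantStep {m : ℕ} {c : R} {p : R[X]} (hc : 0 ≤ c)
    (hp : HasAltCoeffSigns m p) : HasAltCoeffSigns (m + 1) (elephantStep c p) := by
  obtain ⟨hdeg, hsign⟩ := hp
  refine ⟨natDegree_elephantStep_le c p hdeg, ?_⟩
  rintro (_ | k) hk
  · have htop : p.coeff (m + 2) = 0 := coeff_eq_zero_of_natDegree_lt (by omega)
    have hm := hsign 0 (Nat.zero_le m)
    simp only [pow_zero, one_mul, Nat.mul_zero, Nat.sub_zero] at hm ⊢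
    rw [coeff_elephantStep_succ, htop, mul_zero, sub_zero]
    exact mul_nonneg (by positivity) hm
  rcases Nat.lt_or_ge m (2 * k + 2) with hm | hm
  · have h1 := hsign k (by omega)
    rw [show m - 2 * k = 1 by omega] at h1
    rw [show m + 1 - 2 * (k + 1) = 0 by omega, coeff_elephantStep_zero]
    calc (0 : R) ≤ c * ((-1) ^ k * p.coeff 1) := mul_nonneg hc h1
      _ = _ := by ring
  obtain ⟨j, rfl⟩ : ∃ j, m = j + 2 * (k + 1) := ⟨m - 2 * (k + 1), by omega⟩
  have hj := hsign (k + 1) hm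
  have hj2 := hsign k (by omega)
  rw [show j + 2 * (k + 1) - 2 * (k + 1) = j by omega] at hj
  rw [show j + 2 * (k + 1) - 2 * k = j + 2 by omega] at hj2
  rw [show j + 2 * (k + 1) + 1 - 2 * (k + 1) = j + 1 by omega, coeff_elephantStep_succ]
  calc (0 : R) ≤ (1 + c * j) * ((-1) ^ (k + 1) * p.coeff j)
        + c * (j + 2) * ((-1) ^ k * p.coeff (j + 2)) :=
      add_nonneg (mul_nonneg (by positivity) hj) (mul_nonneg (by positivity) hj2)
    _ = _ := by ring

end Signs

lemma hasAltCoeffSigns_elephantR {a : ℝ} (ha : 0 ≤ a) :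
    ∀ n, HasAltCoeffSigns n (elephantR a n)
  | 0 => hasAltCoeffSigns_one
  | 1 => hasAltCoeffSigns_X
  | n + 2 => by
    rw [elephantR_add_two]
    exact (hasAltCoeffSigns_elephantR ha (n + 1)).elephantStep (by positivity)

theorem stmt_10_general (a : ℝ) (ha : 0 ≤ a) (n : ℕ) (k : ℕ) (hk : 2 * k ≤ n) :
    0 ≤ (-1 : ℝ) ^ k * (elephantR a n).coeff (n - 2 * k) :=
  (hasAltCoeffSigns_elephantR ha n).2 k hk

theorem stmt_10 (a : ℝ) (ha : 0 ≤ a) (n : ℕ) (hn : 1 ≤ n) (k : ℕ) (hk : 2 * k ≤ n) :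
    0 ≤ (-1 : ℝ) ^ k * (elephantR a n).coeff (n - 2 * k) :=
  stmt_10_general a ha n k hk
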